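/- (Theorem 3, non-convexity part.) Let o, d, n be positive integers, β > 0, and Y ∈ ℝ^{o×n} with Y ≠ 0. Then the reduced loss L* : ℝ^{d×n} → ℝ is not a convex function on ℝ^{d×n}. -/

import Mathlib

open Matrix BigOperators

attribute [local instance] Matrix.frobeniusNormedAddCommGroup Matrix.frobeniusNormedSpace

/-- Squared Frobenius norm of a real matrix. -/
noncomputable def sqFrob {m n : ℕ} (A : Matrix (Fin m) (Fin n) ℝ) : ℝ :=
  ∑ i, ∑ j, (A i j) ^ 2

/-- The closed-form ridge solution `W*(Φ) = YΦᵀ(ΦΦᵀ + βI)⁻¹`. -/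
noncomputable def Wstar {o d n : ℕ} (β : ℝ) (Y : Matrix (Fin o) (Fin n) ℝ)
    (Φ : Matrix (Fin d) (Fin n) ℝ) : Matrix (Fin o) (Fin d) ℝ :=
  Y * Φᵀ * (Φ * Φᵀ + β • (1 : Matrix (Fin d) (Fin d) ℝ))⁻¹

/-- The reduced loss `L*(Φ) = ‖Y − W*(Φ)Φ‖_F² + β‖W*(Φ)‖_F²`. -/
noncomputable def Lstar {o d n : ℕ} (β : ℝ) (Y : Matrix (Fin o) (Fin n) ℝ)
    (Φ : Matrix (Fin d) (Fin n) ℝ) : ℝ :=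
  sqFrob (Y - Wstar β Y Φ * Φ) + β * sqFrob (Wstar β Y Φ)

/-! The reduced loss is even, `L*(-Φ) = L*(Φ)`, so a convex `L*` would attain its minimum at
`Φ = 0`, where it equals `‖Y‖_F²`. On the other hand the normal equation
`W*(Φ)(ΦΦᵀ + βI) = YΦᵀ` gives `L*(Φ) = ‖Y‖_F² - tr(YΦᵀ(ΦΦᵀ + βI)⁻¹ΦYᵀ)`, and the trace is
positive as soon as `YΦᵀ ≠ 0`, e.g. for a matrix unit `Φ` that selects a nonzero column of `Y`. -/

theorem ConvexOn.apply_zero_le_of_even {𝕜 E β : Type*} [Field 𝕜] [LinearOrder 𝕜]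
    [IsStrictOrderedRing 𝕜] [AddCommGroup E] [Module 𝕜 E] [AddCommGroup β] [PartialOrder β]
    [Module 𝕜 β] {f : E → β} (hf : ConvexOn 𝕜 Set.univ f) (heven : ∀ x, f (-x) = f x) (x : E) :
    f 0 ≤ f x := by
  have h := hf.2 (Set.mem_univ x) (Set.mem_univ (-x)) one_half_pos.le one_half_pos.le
    (add_halves (1 : 𝕜))
  rwa [smul_neg, add_neg_cancel, heven, ← add_smul, add_halves, one_smul] at h

theorem Matrix.trace_mul_mul_transpose_pos {k m : Type*} [Fintype k] [Fintype m]
    {P : Matrix m m ℝ} (hP : P.PosDef) {A : Matrix k m ℝ} (hA : A ≠ 0) :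
    0 < (A * P * Aᵀ).trace := by
  have hdiag (i : k) : (A * P * Aᵀ) i i = A i ⬝ᵥ P *ᵥ A i := by
    simp only [Matrix.mul_apply, dotProduct, Matrix.mulVec, transpose_apply, Finset.mul_sum,
      Finset.sum_mul]
    rw [Finset.sum_comm]
    exact Finset.sum_congr rfl fun _ _ => Finset.sum_congr rfl fun _ _ => by ring
  obtain ⟨i, hi⟩ : ∃ i, A i ≠ 0 := by
    by_contra! h
    exact hA (funext h)
  refine Finset.sum_pos' (fun j _ => ?_) ⟨i, Finset.mem_univ i, ?_⟩
  · simpa [hdiag] using hP.posSemidef.dotProduct_mulVec_nonneg (A j)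
  · simpa [hdiag] using hP.dotProduct_mulVec_pos hi

theorem sqFrob_eq_trace {m n : ℕ} (A : Matrix (Fin m) (Fin n) ℝ) : sqFrob A = (A * Aᵀ).trace := by
  simp [sqFrob, Matrix.trace, Matrix.mul_apply, sq]

theorem posDef_mul_transpose_add_smul_one {d n : ℕ} (Φ : Matrix (Fin d) (Fin n) ℝ) {β : ℝ}
    (hβ : 0 < β) : (Φ * Φᵀ + β • (1 : Matrix (Fin d) (Fin d) ℝ)).PosDef :=
  PosDef.posSemidef_add (posSemidef_self_mul_conjTranspose Φ) (PosDef.one.smul hβ)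

theorem ridge_objective_eq_of_normal_eq {o d n : ℕ} {β : ℝ} {Y : Matrix (Fin o) (Fin n) ℝ}
    {Φ : Matrix (Fin d) (Fin n) ℝ} {W : Matrix (Fin o) (Fin d) ℝ}
    (hW : W * (Φ * Φᵀ + β • 1) = Y * Φᵀ) :
    sqFrob (Y - W * Φ) + β * sqFrob W = sqFrob Y - (W * Φ * Yᵀ).trace := by
  have key : (Y - W * Φ) * (Y - W * Φ)ᵀ + β • (W * Wᵀ) = Y * Yᵀ - W * Φ * Yᵀ := by
    have hWΦ : W * Φ * Φᵀ * Wᵀ + β • (W * Wᵀ) = Y * Φᵀ * Wᵀ := by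
      rw [← hW]; simp [Matrix.mul_add, Matrix.add_mul, Matrix.mul_assoc]
    simp only [transpose_sub, transpose_mul, Matrix.sub_mul, Matrix.mul_sub, ← Matrix.mul_assoc]
    rw [← hWΦ]
    abel
  rw [sqFrob_eq_trace, sqFrob_eq_trace, sqFrob_eq_trace, ← smul_eq_mul, ← trace_smul, ← trace_add,
    key, trace_sub]

section ReducedLoss

variable {o d n : ℕ} {β : ℝ} (Y : Matrix (Fin o) (Fin n) ℝ)

theorem Lstar_zero : Lstar β Y (0 : Matrix (Fin d) (Fin n) ℝ) = sqFrob Y := by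
  simp [Lstar, Wstar, sqFrob]

theorem Lstar_neg (Φ : Matrix (Fin d) (Fin n) ℝ) : Lstar β Y (-Φ) = Lstar β Y Φ := by
  simp [Lstar, Wstar, sqFrob]

theorem Wstar_mul_gram_add_smul_one (hβ : 0 < β) (Φ : Matrix (Fin d) (Fin n) ℝ) :
    Wstar β Y Φ * (Φ * Φᵀ + β • 1) = Y * Φᵀ :=
  nonsing_inv_mul_cancel_right _ _ (posDef_mul_transpose_add_smul_one Φ hβ).det_pos.ne'.isUnit

theorem Lstar_eq_sqFrob_sub_trace (hβ : 0 < β) (Φ : Matrix (Fin d) (Fin n) ℝ) :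
    Lstar β Y Φ = sqFrob Y - (Y * Φᵀ * (Φ * Φᵀ + β • 1)⁻¹ * (Y * Φᵀ)ᵀ).trace := by
  rw [Lstar, ridge_objective_eq_of_normal_eq (Wstar_mul_gram_add_smul_one Y hβ Φ), Wstar,
    transpose_mul, transpose_transpose, Matrix.mul_assoc _ Φ]

theorem Lstar_lt_sqFrob (hβ : 0 < β) {Φ : Matrix (Fin d) (Fin n) ℝ} (hΦ : Y * Φᵀ ≠ 0) :
    Lstar β Y Φ < sqFrob Y := by
  rw [Lstar_eq_sqFrob_sub_trace Y hβ]
  linarith [trace_mul_mul_transpose_pos (posDef_mul_transpose_add_smul_one Φ hβ).inv hΦ]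

end ReducedLoss

theorem stmt_9_general (o d n : ℕ) (hd : 0 < d)
    (β : ℝ) (hβ : 0 < β)
    (Y : Matrix (Fin o) (Fin n) ℝ) (hY : Y ≠ 0) :
    ¬ ConvexOn ℝ (Set.univ : Set (Matrix (Fin d) (Fin n) ℝ)) (Lstar β Y) := by
  intro hconv
  obtain ⟨i, j, hij⟩ : ∃ i j, Y i j ≠ 0 := by
    by_contra! h
    exact hY (Matrix.ext h)
  set k : Fin d := ⟨0, hd⟩
  set Φ : Matrix (Fin d) (Fin n) ℝ := single k j 1
  have hcorr : Y * Φᵀ ≠ 0 := fun h => hij (by simpa [Φ] using congrFun₂ h i k)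
  have hmin := hconv.apply_zero_le_of_even (Lstar_neg Y) Φ
  rw [Lstar_zero] at hmin
  exact (Lstar_lt_sqFrob Y hβ hcorr).not_ge hmin

theorem stmt_9 (o d n : ℕ) (ho : 0 < o) (hd : 0 < d) (hn : 0 < n)
    (β : ℝ) (hβ : 0 < β)
    (Y : Matrix (Fin o) (Fin n) ℝ) (hY : Y ≠ 0) :
    ¬ ConvexOn ℝ (Set.univ : Set (Matrix (Fin d) (Fin n) ℝ)) (Lstar β Y) :=
  stmt_9_general o d n hd β hβ Y hY
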